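/- arXiv:1308.4290 — 2 statements merged into one kernel-verified Lean document; each statement's English description precedes it below -/
import Mathlib

section
/- Every twisted automorphism of a K-loop is an automorphism. -/
/-- A right loop: identity `e` and bijective right translations. -/
structure RightLoop (S : Type*) where
  op : S → S → S
  e : S
  op_e : ∀ x, op x e = x
  e_op : ∀ x, op e x = x
  bij : ∀ a, Function.Bijective (fun x => op x a)

/-- `h` is a twisted automorphism of the right loop `(S, o)` with inverse map `inv`. -/
def IsTAut {S : Type*} (L : RightLoop S) (inv : S → S) (h : Equiv.Perm S) : Prop :=
  ∀ x y : S, y ≠ L.e → h (L.op x y) = L.op (inv (h (inv x))) (h y)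

/-!
Write `τ x = (h x')'`, so that `h (x ∘ y) = τ x ∘ h y` for `y ≠ e`. Evaluating `h` on both sides
of the left alternative law `(x ∘ x) ∘ y = x ∘ (x ∘ y)` gives, using the automorphic inverse
property to compute `τ (x ∘ x) = h x ∘ τ x`, the identity `(h x ∘ τ x) ∘ h y = (τ x ∘ τ x) ∘ h y`;
two right cancellations give `h x = τ x`, which makes `h` multiplicative. This needs some
`y ∉ {e, x'}`; when there is none, `S = {e, x}` and `h` fixes `x` anyway.
-/

namespace RightLoop

variable {S : Type*} {L : RightLoop S} {inv : S → S}

def IsTwoSidedInv (L : RightLoop S) (inv : S → S) : Prop :=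
  ∀ x, L.op (inv x) x = L.e ∧ L.op x (inv x) = L.e

structure IsKLoop (L : RightLoop S) (inv : S → S) : Prop where
  left_bij : ∀ a, Function.Bijective (L.op a)
  isTwoSidedInv : L.IsTwoSidedInv inv
  inv_op : ∀ a b, inv (L.op a b) = L.op (inv a) (inv b)
  left_alternative : ∀ a b, L.op (L.op a a) b = L.op a (L.op a b)

theorem op_right_cancel {a b c : S} (habc : L.op a c = L.op b c) : a = b :=
  (L.bij c).1 habc

theorem IsTwoSidedInv.inv_e (hinv : L.IsTwoSidedInv inv) : inv L.e = L.e := by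
  simpa only [L.op_e] using (hinv L.e).1

theorem IsTwoSidedInv.inv_inv (hinv : L.IsTwoSidedInv inv) (x : S) : inv (inv x) = x :=
  op_right_cancel ((hinv (inv x)).1.trans (hinv x).2.symm)

theorem IsTwoSidedInv.inv_ne_e (hinv : L.IsTwoSidedInv inv) {x : S} (hx : x ≠ L.e) :
    inv x ≠ L.e := fun hix => hx <| by
  rw [← hinv.inv_inv x, hix, hinv.inv_e]

theorem IsTwoSidedInv.eq_inv_of_op_eq_e (hinv : L.IsTwoSidedInv inv) {a b : S}
    (hleft : Function.Injective (L.op a)) (hab : L.op a b = L.e) : b = inv a :=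
  hleft (hab.trans (hinv a).2.symm)

end RightLoop

namespace IsTAut

variable {S : Type*} {L : RightLoop S} {inv : S → S} {h : Equiv.Perm S}

theorem map_e [Nontrivial S] (hinv : L.IsTwoSidedInv inv) (hT : IsTAut L inv h) :
    h L.e = L.e := by
  obtain ⟨z, hz⟩ := exists_ne L.e
  have hτe : L.op L.e (h z) = L.op (inv (h L.e)) (h z) := by
    simpa only [L.e_op, hinv.inv_e] using hT L.e z hz
  rw [← hinv.inv_inv (h L.e), ← RightLoop.op_right_cancel hτe, hinv.inv_e]

theorem map_inv_of_ne {x y : S} (hK : L.IsKLoop inv) (hT : IsTAut L inv h) (hx : x ≠ L.e)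
    (hy : y ≠ L.e) (hyx : y ≠ inv x) : h (inv x) = inv (h x) := by
  have hinv := hK.isTwoSidedInv
  have hxy : L.op x y ≠ L.e := fun hxy => hyx (hinv.eq_inv_of_op_eq_e (hK.left_bij x).1 hxy)
  set τ := inv (h (inv x))
  have hsquare : h (L.op (L.op x x) y) = L.op (L.op (h x) τ) (h y) := by
    rw [hT _ _ hy, hK.inv_op, hT _ _ (hinv.inv_ne_e hx), hK.inv_op, hinv.inv_inv, hinv.inv_inv]
  have hnested : h (L.op x (L.op x y)) = L.op (L.op τ τ) (h y) := by
    rw [hT _ _ hxy, hT _ _ hy, hK.left_alternative]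
  rw [hK.left_alternative, hnested] at hsquare
  have hτ : h x = τ := RightLoop.op_right_cancel (RightLoop.op_right_cancel hsquare.symm)
  rw [hτ, hinv.inv_inv]

theorem map_inv [Nontrivial S] (hK : L.IsKLoop inv) (hT : IsTAut L inv h) (x : S) :
    h (inv x) = inv (h x) := by
  have hinv := hK.isTwoSidedInv
  by_cases hx : x = L.e
  · rw [hx, hinv.inv_e, hT.map_e hinv, hinv.inv_e]
  by_cases hgap : ∃ y, y ≠ L.e ∧ y ≠ inv x
  · obtain ⟨y, hy, hyx⟩ := hgap
    exact map_inv_of_ne hK hT hx hy hyx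
  push Not at hgap
  have hxx : inv x = x := (hgap x hx).symm
  have hhx : h x = x :=
    (hgap (h x) fun hhx => hx (h.injective (hhx.trans (hT.map_e hinv).symm))).trans hxx
  rw [hxx, hhx, hxx]

end IsTAut

/-- Every twisted automorphism of a K-loop (a loop with unique inverses having the
automorphic inverse property and the left alternative law) is an automorphism. -/
theorem kloop_taut_is_aut {S : Type*} (L : RightLoop S)
    (hloop : ∀ a : S, Function.Bijective (L.op a))
    (inv : S → S)
    (hinv : ∀ x, L.op (inv x) x = L.e ∧ L.op x (inv x) = L.e)
    (haip : ∀ a b : S, inv (L.op a b) = L.op (inv a) (inv b))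
    (hla : ∀ a b : S, L.op (L.op a a) b = L.op a (L.op a b))
    (h : Equiv.Perm S) (hT : IsTAut L inv h) :
    ∀ x y : S, h (L.op x y) = L.op (h x) (h y) := by
  have hK : L.IsKLoop inv := ⟨hloop, hinv, haip, hla⟩
  intro x y
  rcases subsingleton_or_nontrivial S with _ | _
  · exact Subsingleton.elim _ _
  by_cases hy : y = L.e
  · rw [hy, L.op_e, IsTAut.map_e hinv hT, L.op_e]
  · rw [hT x y hy, IsTAut.map_inv hK hT, RightLoop.IsTwoSidedInv.inv_inv hinv]
end

section
/- Let (S, o) be a twisted gyrogroup (a twisted right gyrogroup satisfying the right loop property f(x, y) = f(x, x o y)). Then f(x, y)⁻¹ = f(x o y, y') and f(x, y)⁻¹ = f(x o y, x) for all x, y ∈ S. -/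
/-- The inner mapping group: the subgroup of `Equiv.Perm S` generated by the
right inner mappings `f y z`. -/
def innerGroup {S : Type*} (f : S → S → Equiv.Perm S) : Subgroup (Equiv.Perm S) :=
  Subgroup.closure (Set.range (fun p : S × S => f p.1 p.2))

/-!
Since `f(y', y) = id`, the defining identity `f(y,z)(x) o (y o z) = (x o y) o z` at `(y', y)`
shows that right translation by `y'` inverts right translation by `y`. Applying the defining
identity at `(x, y)` and at `(x o y, y')` then shows, after cancelling a right translation by
`x = (x o y) o y'`, that `f(x o y, y') ∘ f(x, y) = id`. The second identity follows from the first
by the right loop property `f(x o y, y') = f(x o y, (x o y) o y') = f(x o y, x)`.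
-/

namespace RightLoop

variable {S : Type*} (L : RightLoop S)

theorem op_left_injective (a : S) : Function.Injective (L.op · a) :=
  (L.bij a).1

variable {inv : S → S} {f : S → S → Equiv.Perm S}

theorem op_inv_op (hinv : ∀ x, L.op (inv x) x = L.e)
    (hf : ∀ y z x, L.op (f y z x) (L.op y z) = L.op (L.op x y) z)
    (hff : ∀ y, f (inv y) y = 1) (x y : S) :
    L.op (L.op x (inv y)) y = x := by
  simpa [hff, hinv, L.op_e] using (hf (inv y) y x).symm

theorem op_op_inv (hinv : ∀ x, L.op (inv x) x = L.e)
    (hf : ∀ y z x, L.op (f y z x) (L.op y z) = L.op (L.op x y) z)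
    (hff : ∀ y, f (inv y) y = 1) (x y : S) :
    L.op (L.op x y) (inv y) = x :=
  L.op_left_injective y (L.op_inv_op hinv hf hff (L.op x y) y)

theorem inner_op_inv_mul_inner (hinv : ∀ x, L.op (inv x) x = L.e)
    (hf : ∀ y z x, L.op (f y z x) (L.op y z) = L.op (L.op x y) z)
    (hff : ∀ y, f (inv y) y = 1) (x y : S) :
    f (L.op x y) (inv y) * f x y = 1 := by
  have cancel := L.op_op_inv hinv hf hff
  ext a
  refine L.op_left_injective x ?_
  dsimp only [Equiv.Perm.mul_apply, Equiv.Perm.one_apply]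
  calc L.op (f (L.op x y) (inv y) (f x y a)) x
      = L.op (f (L.op x y) (inv y) (f x y a)) (L.op (L.op x y) (inv y)) := by rw [cancel]
    _ = L.op (L.op (f x y a) (L.op x y)) (inv y) := hf _ _ _
    _ = L.op a x := by rw [hf, cancel]

end RightLoop

theorem twisted_gyrogroup_identities_general {S : Type*} (L : RightLoop S)
    (inv : S → S) (hinv : ∀ x, L.op (inv x) x = L.e)
    (f : S → S → Equiv.Perm S)
    (hf : ∀ y z x, L.op (f y z x) (L.op y z) = L.op (L.op x y) z)
    (hff : ∀ y, f (inv y) y = 1)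
    (hrlp : ∀ x y, f x y = f x (L.op x y)) :
    ∀ x y : S, (f x y)⁻¹ = f (L.op x y) (inv y) ∧ (f x y)⁻¹ = f (L.op x y) x := by
  intro x y
  have first : (f x y)⁻¹ = f (L.op x y) (inv y) :=
    (eq_inv_of_mul_eq_one_left (L.inner_op_inv_mul_inner hinv hf hff x y)).symm
  refine ⟨first, ?_⟩
  rw [first, hrlp (L.op x y) (inv y), L.op_op_inv hinv hf hff x y]

/-- In a twisted gyrogroup, `f(x,y)⁻¹ = f(x o y, y')` and `f(x,y)⁻¹ = f(x o y, x)`. -/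
theorem twisted_gyrogroup_identities {S : Type*} (L : RightLoop S)
    (inv : S → S) (hinv : ∀ x, L.op (inv x) x = L.e)
    (f : S → S → Equiv.Perm S)
    (hf : ∀ y z x, L.op (f y z x) (L.op y z) = L.op (L.op x y) z)
    (hff : ∀ y, f (inv y) y = 1)
    (htw : ∀ y z x w, w ≠ L.e →
      f y z (L.op x w) = L.op (inv (f y z (inv x))) (f y z w))
    (hrlp : ∀ x y, f x y = f x (L.op x y)) :
    ∀ x y : S, (f x y)⁻¹ = f (L.op x y) (inv y) ∧ (f x y)⁻¹ = f (L.op x y) x :=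
  twisted_gyrogroup_identities_general L inv hinv f hf hff hrlp
end
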